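/- arXiv:0711.0660 — 4 statements merged into one kernel-verified Lean document; each statement's English description precedes it below -/
import Mathlib

section
/- Assume η_n → 0 and set a_n = min{√n, η_n^{-1}}. Then for every ε > 0 there exists M ≥ 0 such that sup_{n∈ℕ} sup_{θ∈ℝ} P_{n,θ}(a_n|θ̂_H − θ| > M) < ε, i.e., the hard-thresholding estimator is uniformly a_n-consistent. -/
open MeasureTheory ProbabilityTheory Real Filter Topology Set

noncomputable def stdGauss : Measure ℝ := gaussianReal 0 1

/-- Standard normal cdf. -/
noncomputable def Phi (x : ℝ) : ℝ := (stdGauss (Set.Iic x)).toReal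

/-- Standard normal density. -/
noncomputable def phi (x : ℝ) : ℝ := gaussianPDFReal 0 1 x

/-- Hard-thresholding estimator. -/
noncomputable def hardThresh (η y : ℝ) : ℝ := if η < |y| then y else 0

/-- Soft-thresholding (LASSO) estimator. -/
noncomputable def softThresh (η y : ℝ) : ℝ := Real.sign y * max (|y| - η) 0

/-- SCAD estimator. -/
noncomputable def scadThresh (a η y : ℝ) : ℝ :=
  if |y| ≤ 2 * η then Real.sign y * max (|y| - η) 0
  else if |y| ≤ a * η then ((a - 1) * y - Real.sign y * a * η) / (a - 2)
  else y

/-!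
Write `ȳ = θ + z / √n` and `a = min (√n) η⁻¹`. If `ȳ` survives the threshold, the error is
`z / √n` and `a ≤ √n`; if it is killed, then `|θ| ≤ η + |z| / √n` and `a ≤ η⁻¹`. Either way
`a |θ̂ - θ| ≤ 1 + |z|`, uniformly in `n` and `θ`, so the probability in question is bounded by the
Gaussian tail `P(|Z| > M - 1)`, which is small for large `M`.
-/

lemma abs_hardThresh_sub_le {η : ℝ} (hη : 0 ≤ η) (y θ : ℝ) :
    |hardThresh η y - θ| ≤ η + |y - θ| := by
  unfold hardThresh
  split_ifs with h
  · linarith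
  · calc |0 - θ| = |y - (y - θ)| := by rw [zero_sub, abs_neg, sub_sub_cancel]
      _ ≤ |y| + |y - θ| := abs_sub _ _
      _ ≤ η + |y - θ| := by linarith

lemma mul_abs_div_le_abs {a s : ℝ} (has : a ≤ s) (z : ℝ) : a * |z / s| ≤ |z| := by
  rcases le_or_gt s 0 with hs | hs
  · calc a * |z / s| ≤ s * |z / s| := by gcongr
      _ ≤ 0 := mul_nonpos_of_nonpos_of_nonneg hs (abs_nonneg _)
      _ ≤ |z| := abs_nonneg z
  · calc a * |z / s| ≤ s * |z / s| := by gcongr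
      _ = |z| := by rw [abs_div, abs_of_pos hs, mul_div_cancel₀ _ hs.ne']

lemma min_sqrt_inv_mul_abs_hardThresh_sub_le {η : ℝ} (hη : 0 < η) (n : ℕ) (θ z : ℝ) :
    min (√n) η⁻¹ * |hardThresh η (θ + z / √n) - θ| ≤ 1 + |z| := by
  set a := min (√n) η⁻¹
  have ha : 0 ≤ a := le_min (sqrt_nonneg _) (inv_nonneg.mpr hη.le)
  have haη : a * η ≤ 1 := by
    calc a * η ≤ η⁻¹ * η := by gcongr; exact min_le_right _ _
      _ = 1 := inv_mul_cancel₀ hη.ne'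
  have haz : a * |z / √n| ≤ |z| := mul_abs_div_le_abs (min_le_left _ _) z
  calc a * |hardThresh η (θ + z / √n) - θ|
      ≤ a * (η + |z / √n|) := by
        gcongr
        simpa using abs_hardThresh_sub_le hη.le (θ + z / √n) θ
    _ ≤ 1 + |z| := by rw [mul_add]; linarith

lemma tendsto_measure_abs_gt_atTop (μ : Measure ℝ) [IsFiniteMeasure μ] :
    Tendsto (fun M : ℝ => μ {z | M < |z|}) atTop (𝓝 0) := by
  simpa using tendsto_measure_norm_gt_of_isTightMeasureSet (isTightMeasureSet_singleton (μ := μ))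

instance : IsProbabilityMeasure stdGauss := by unfold stdGauss; infer_instance

theorem stmt_6_general (η : ℕ → ℝ) (hηpos : ∀ n, 0 < η n) :
    ∀ ε > (0 : ℝ), ∃ M : ℝ, 0 ≤ M ∧
      (⨆ n : ℕ, ⨆ θ : ℝ,
          stdGauss {z : ℝ |
            M < min (Real.sqrt n) (η n)⁻¹ * |hardThresh (η n) (θ + z / Real.sqrt n) - θ|})
        < ENNReal.ofReal ε := by
  intro ε hε
  obtain ⟨M, hM, hM0⟩ := (((tendsto_measure_abs_gt_atTop stdGauss).eventually_lt_const
    (ENNReal.ofReal_pos.mpr hε)).and (eventually_ge_atTop 0)).exists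
  refine ⟨M + 1, by positivity, lt_of_le_of_lt ?_ hM⟩
  refine iSup₂_le fun n θ => measure_mono fun z hz => ?_
  have hbound := min_sqrt_inv_mul_abs_hardThresh_sub_le (hηpos n) n θ z
  simp only [mem_ofPred_eq] at hz ⊢
  linarith

theorem stmt_6 (η : ℕ → ℝ) (hηpos : ∀ n, 0 < η n) (hη0 : Tendsto η atTop (𝓝 0)) :
    ∀ ε > (0 : ℝ), ∃ M : ℝ, 0 ≤ M ∧
      (⨆ n : ℕ, ⨆ θ : ℝ,
          stdGauss {z : ℝ |
            M < min (Real.sqrt n) (η n)⁻¹ * |hardThresh (η n) (θ + z / Real.sqrt n) - θ|})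
        < ENNReal.ofReal ε :=
  stmt_6_general η hηpos
end

section
/- Suppose η_n → 0, √n·η_n → ∞, θ_n/η_n → ζ with |ζ| < 1, and √n·θ_n → ν ∈ ℝ. Then the distribution of √n(θ̂_H − θ_n) under P_{n,θ_n} converges weakly to point mass at −ν. -/
open MeasureTheory ProbabilityTheory Real Filter Topology Set

/-!
Since `θ n / η n → ζ` with `|ζ| < 1` while the noise `z / √n` is negligible against `η n`
(because `√n η n → ∞`), for every fixed `z` the observation `θ n + z / √n` eventually lies below
the threshold, so the estimator is `0` and the rescaled error is `-√n θ n → -ν`. Pointwise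
convergence of the rescaled errors as functions of the Gaussian noise gives convergence of their
laws by dominated convergence.
-/

theorem tendsto_integral_map_of_ae_tendsto {Ω E ι : Type*} [MeasurableSpace Ω]
    [TopologicalSpace E] [MeasurableSpace E] [OpensMeasurableSpace E]
    {μ : Measure Ω} [IsFiniteMeasure μ] {l : Filter ι} [l.IsCountablyGenerated]
    {X : ι → Ω → E} {Y : Ω → E} (hX : ∀ i, AEMeasurable (X i) μ) (hY : AEMeasurable Y μ)
    (hlim : ∀ᵐ ω ∂μ, Tendsto (fun i => X i ω) l (𝓝 (Y ω))) (f : BoundedContinuousFunction E ℝ) :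
    Tendsto (fun i => ∫ x, f x ∂(μ.map (X i))) l (𝓝 (∫ x, f x ∂(μ.map Y))) := by
  have hf : Measurable f := f.continuous.measurable
  simp only [integral_map (hX _) hf.aestronglyMeasurable, integral_map hY hf.aestronglyMeasurable]
  refine tendsto_integral_filter_of_dominated_convergence (fun _ => ‖f‖) ?_ ?_
    (integrable_const _) ?_
  · exact .of_forall fun i => (hf.comp_aemeasurable (hX i)).aestronglyMeasurable
  · exact .of_forall fun i => .of_forall fun ω => f.norm_coe_le_norm _
  · filter_upwards [hlim] with ω hω
    exact (f.continuous.tendsto _).comp hω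

@[fun_prop]
theorem measurable_hardThresh (η : ℝ) : Measurable (hardThresh η) :=
  Measurable.ite (measurableSet_lt measurable_const measurable_id.abs) measurable_id
    measurable_const

theorem hardThresh_of_abs_le {η y : ℝ} (h : |y| ≤ η) : hardThresh η y = 0 :=
  if_neg h.not_gt

theorem eventually_abs_le_of_tendsto_div {ι : Type*} {l : Filter ι} {y η : ι → ℝ} {ζ : ℝ}
    (hη : ∀ i, 0 < η i) (hζ : |ζ| < 1) (hyη : Tendsto (fun i => y i / η i) l (𝓝 ζ)) :
    ∀ᶠ i in l, |y i| ≤ η i := by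
  filter_upwards [hyη.abs.eventually_lt_const hζ] with i hi
  rw [abs_div, abs_of_pos (hη i), div_lt_one (hη i)] at hi
  exact hi.le

theorem tendsto_sqrt_mul_hardThresh_sub {η θ : ℕ → ℝ} {ζ ν : ℝ} (hηpos : ∀ n, 0 < η n)
    (hζ : |ζ| < 1) (hηe : Tendsto (fun n : ℕ => √n * η n) atTop atTop)
    (hθζ : Tendsto (fun n => θ n / η n) atTop (𝓝 ζ))
    (hθν : Tendsto (fun n : ℕ => √n * θ n) atTop (𝓝 ν)) (z : ℝ) :
    Tendsto (fun n : ℕ => √n * (hardThresh (η n) (θ n + z / √n) - θ n)) atTop (𝓝 (-ν)) := by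
  have hnoise : Tendsto (fun n : ℕ => z / (√n * η n)) atTop (𝓝 0) :=
    tendsto_const_nhds.div_atTop hηe
  have hratio : Tendsto (fun n : ℕ => (θ n + z / √n) / η n) atTop (𝓝 ζ) := by
    simpa only [add_zero, add_div, div_div] using hθζ.add hnoise
  have hzero : ∀ᶠ n in atTop, hardThresh (η n) (θ n + z / √n) = 0 := by
    filter_upwards [eventually_abs_le_of_tendsto_div hηpos hζ hratio] with n hn
    exact hardThresh_of_abs_le hn
  refine hθν.neg.congr' ?_
  filter_upwards [hzero] with n hn
  rw [hn]
  ring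

instance isProbabilityMeasure_stdGauss : IsProbabilityMeasure stdGauss := by
  unfold stdGauss
  infer_instance

theorem stmt_14_general (η θ : ℕ → ℝ) (hηpos : ∀ n, 0 < η n) (ζ ν : ℝ) (hζ : |ζ| < 1)
    (hηe : Tendsto (fun n : ℕ => Real.sqrt n * η n) atTop atTop)
    (hθζ : Tendsto (fun n => θ n / η n) atTop (𝓝 ζ))
    (hθν : Tendsto (fun n : ℕ => Real.sqrt n * θ n) atTop (𝓝 ν)) :
    ∀ f : BoundedContinuousFunction ℝ ℝ,
      Tendsto (fun n : ℕ => ∫ x, f x ∂(Measure.map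
            (fun z => Real.sqrt n * (hardThresh (η n) (θ n + z / Real.sqrt n) - θ n)) stdGauss))
        atTop (𝓝 (∫ x, f x ∂(Measure.dirac (-ν) : Measure ℝ))) := by
  intro f
  have hdirac : (Measure.dirac (-ν) : Measure ℝ) = stdGauss.map (fun _ => -ν) := by
    rw [Measure.map_const, measure_univ, one_smul]
  rw [hdirac]
  exact tendsto_integral_map_of_ae_tendsto (fun n => by fun_prop) aemeasurable_const
    (.of_forall (tendsto_sqrt_mul_hardThresh_sub hηpos hζ hηe hθζ hθν)) f

theorem stmt_14 (η θ : ℕ → ℝ) (hηpos : ∀ n, 0 < η n) (ζ ν : ℝ) (hζ : |ζ| < 1)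
    (hη0 : Tendsto η atTop (𝓝 0))
    (hηe : Tendsto (fun n : ℕ => Real.sqrt n * η n) atTop atTop)
    (hθζ : Tendsto (fun n => θ n / η n) atTop (𝓝 ζ))
    (hθν : Tendsto (fun n : ℕ => Real.sqrt n * θ n) atTop (𝓝 ν)) :
    ∀ f : BoundedContinuousFunction ℝ ℝ,
      Tendsto (fun n : ℕ => ∫ x, f x ∂(Measure.map
            (fun z => Real.sqrt n * (hardThresh (η n) (θ n + z / Real.sqrt n) - θ n)) stdGauss))
        atTop (𝓝 (∫ x, f x ∂(Measure.dirac (-ν) : Measure ℝ))) :=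
  stmt_14_general η θ hηpos ζ ν hζ hηe hθζ hθν
end

section
/- Suppose η_n → 0, √n·η_n → ∞, ζ = 1, θ_n/η_n → 1, and √n(η_n − θ_n) → r ∈ ℝ. Then the cdf F_{H,n,θ_n}(x) of √n(θ̂_H − θ_n) converges, for every x ∈ ℝ, to Φ(r) + ∫_{−∞}^{x} φ(u)·1(u > r) du. -/
open MeasureTheory ProbabilityTheory Real Filter Topology Set

/-!
For large `n` the estimator keeps `ȳ` unless `ȳ` falls in `[-η, η]`, where it returns `0`; in the
scale `z = √n (ȳ - θ)` this band is `[-√n (η + θ), √n (η - θ)]` and is mapped to `-√n θ`. Since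
`√n η → ∞` and `√n (η - θ) → r`, both `-√n θ` and the left end of the band eventually lie below any
fixed `x`, so the event `√n (θ̂_H - θ) ≤ x` is exactly `z ≤ max x (√n (η - θ))`. Its probability is
`Φ (max x (√n (η - θ))) → Φ (max x r)`, which is the claimed limit.
-/

lemma phi_integrable : Integrable phi := integrable_gaussianPDFReal 0 1

lemma Phi_eq_integral (x : ℝ) : Phi x = ∫ u in Iic x, phi u := by
  rw [Phi, stdGauss, gaussianReal_apply_eq_integral 0 one_ne_zero,
    ENNReal.toReal_ofReal (integral_nonneg fun u => gaussianPDFReal_nonneg 0 1 u)]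
  rfl

lemma Phi_add_integral_Ioc {a b : ℝ} (hab : a ≤ b) : Phi a + ∫ u in Ioc a b, phi u = Phi b := by
  rw [Phi_eq_integral, Phi_eq_integral, ← setIntegral_union (Iic_disjoint_Ioc le_rfl)
    measurableSet_Ioc phi_integrable.integrableOn phi_integrable.integrableOn,
    Iic_union_Ioc_eq_Iic hab]

lemma continuous_Phi : Continuous Phi := by
  refine continuous_iff_continuousAt.2 fun x => ?_
  have h := phi_integrable.integrableOn.continuousOn_Iic_primitive_Iic (a₀ := x + 1)
  simpa only [← Phi_eq_integral] using h.continuousAt (Iic_mem_nhds (by linarith))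

lemma Phi_add_integral_Iic_ite (r x : ℝ) :
    Phi r + ∫ u in Iic x, (if r < u then phi u else 0) = Phi (max x r) := by
  have hind : (fun u => if r < u then phi u else 0) = (Ioi r).indicator phi := by
    ext u; simp [indicator_apply]
  rw [hind, setIntegral_indicator measurableSet_Ioi, Iic_inter_Ioi]
  rcases le_total x r with h | h
  · simp [Ioc_eq_empty (not_lt.2 h), max_eq_right h]
  · rw [max_eq_left h, Phi_add_integral_Ioc h]

lemma abs_add_div_le_iff {s : ℝ} (hs : 0 < s) (η θ z : ℝ) :
    |θ + z / s| ≤ η ↔ -(s * (η + θ)) ≤ z ∧ z ≤ s * (η - θ) := by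
  rw [abs_le, ← sub_le_iff_le_add', le_div_iff₀ hs, ← le_sub_iff_add_le', div_le_iff₀ hs]
  constructor <;> rintro ⟨h₁, h₂⟩ <;> constructor <;> linarith

lemma setOf_scaled_hardThresh_le {s η θ x : ℝ} (hs : 0 < s) (hθ : -(s * θ) ≤ x)
    (hηθ : -(s * (η + θ)) ≤ x) :
    {z : ℝ | s * (hardThresh η (θ + z / s) - θ) ≤ x} = Iic (max x (s * (η - θ))) := by
  ext z
  have hband := abs_add_div_le_iff hs η θ z
  simp only [mem_ofPred_eq, mem_Iic, hardThresh, le_max_iff]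
  split_ifs with h
  · rw [add_sub_cancel_left, mul_div_cancel₀ z hs.ne']
    refine ⟨Or.inl, ?_⟩
    rintro (hzx | hz)
    · exact hzx
    · by_contra hzx
      exact h.not_ge (hband.2 ⟨hηθ.trans (not_le.1 hzx).le, hz⟩)
  · exact iff_of_true (by linarith) (Or.inr (hband.1 (not_lt.1 h)).2)

theorem stmt_15_general (η θ : ℕ → ℝ) (r : ℝ)
    (hηe : Tendsto (fun n : ℕ => Real.sqrt n * η n) atTop atTop)
    (hr : Tendsto (fun n : ℕ => Real.sqrt n * (η n - θ n)) atTop (𝓝 r)) :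
    ∀ x : ℝ,
      Tendsto (fun n : ℕ => (stdGauss {z : ℝ |
          Real.sqrt n * (hardThresh (η n) (θ n + z / Real.sqrt n) - θ n) ≤ x}).toReal)
        atTop (𝓝 (Phi r + ∫ u in Set.Iic x, (if r < u then phi u else 0))) := by
  intro x
  rw [Phi_add_integral_Iic_ite]
  have hθ : Tendsto (fun n : ℕ => Real.sqrt n * θ n) atTop atTop :=
    (hηe.atTop_add hr.neg).congr fun n => by ring
  have hηθ : Tendsto (fun n : ℕ => Real.sqrt n * (η n + θ n)) atTop atTop :=
    (hηe.atTop_add_atTop hθ).congr fun n => by ring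
  have hset : ∀ᶠ n : ℕ in atTop,
      {z : ℝ | Real.sqrt n * (hardThresh (η n) (θ n + z / Real.sqrt n) - θ n) ≤ x}
        = Iic (max x (Real.sqrt n * (η n - θ n))) := by
    filter_upwards [eventually_gt_atTop 0, hθ.eventually_ge_atTop (-x),
      hηθ.eventually_ge_atTop (-x)] with n hn h₁ h₂
    exact setOf_scaled_hardThresh_le (by positivity) (by linarith) (by linarith)
  refine ((continuous_Phi.tendsto _).comp (tendsto_const_nhds.max hr)).congr' ?_
  filter_upwards [hset] with n hn
  rw [Function.comp_apply, Phi, hn]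

theorem stmt_15 (η θ : ℕ → ℝ) (hηpos : ∀ n, 0 < η n) (r : ℝ)
    (hη0 : Tendsto η atTop (𝓝 0))
    (hηe : Tendsto (fun n : ℕ => Real.sqrt n * η n) atTop atTop)
    (hθζ : Tendsto (fun n => θ n / η n) atTop (𝓝 1))
    (hr : Tendsto (fun n : ℕ => Real.sqrt n * (η n - θ n)) atTop (𝓝 r)) :
    ∀ x : ℝ,
      Tendsto (fun n : ℕ => (stdGauss {z : ℝ |
          Real.sqrt n * (hardThresh (η n) (θ n + z / Real.sqrt n) - θ n) ≤ x}).toReal)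
        atTop (𝓝 (Phi r + ∫ u in Set.Iic x, (if r < u then phi u else 0))) :=
  stmt_15_general η θ r hηe hr
end

section
/- Suppose η_n → 0, √n·η_n → ∞, and θ_n/η_n → ζ ∈ ℝ. Then the distribution of η_n^{-1}(θ̂_S − θ_n) under P_{n,θ_n} converges weakly to point mass at −sign(ζ)·min(1,|ζ|). -/
open MeasureTheory ProbabilityTheory Real Filter Topology Set

/-!
Writing `y = θₙ + Z/√n`, the scaled error is `S(y/ηₙ) - θₙ/ηₙ` with `S` the soft-thresholding
map at level one. Since `y/ηₙ = θₙ/ηₙ + Z/(√n ηₙ) → ζ` pointwise and `S` is continuous, the error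
converges almost surely, hence in distribution, to the constant `S ζ - ζ = -sign ζ · min 1 |ζ|`.
-/

instance inst_s18 : IsProbabilityMeasure stdGauss :=
  inferInstanceAs (IsProbabilityMeasure (gaussianReal 0 1))

namespace MeasureTheory.TendstoInDistribution

variable {ι E Ω' : Type*} {Ω : ι → Type*} {m : ∀ i, MeasurableSpace (Ω i)}
  {μ : (i : ι) → Measure (Ω i)} [∀ i, IsProbabilityMeasure (μ i)]
  {m' : MeasurableSpace Ω'} {μ' : Measure Ω'} [IsProbabilityMeasure μ']
  [MeasurableSpace E] [TopologicalSpace E] [OpensMeasurableSpace E]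
  {X : (i : ι) → Ω i → E} {Z : Ω' → E} {l : Filter ι}

theorem tendsto_integral_map (h : TendstoInDistribution X l Z μ μ')
    (f : BoundedContinuousFunction E ℝ) :
    Tendsto (fun i ↦ ∫ x, f x ∂(μ i).map (X i)) l (𝓝 (∫ x, f x ∂μ'.map Z)) :=
  ProbabilityMeasure.tendsto_iff_forall_integral_tendsto.mp h.tendsto f

end MeasureTheory.TendstoInDistribution

theorem softThresh_eq_max_add_min {η : ℝ} (hη : 0 ≤ η) (y : ℝ) :
    softThresh η y = max (y - η) 0 + min (y + η) 0 := by
  unfold softThresh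
  rcases lt_trichotomy y 0 with hy | rfl | hy
  · rw [Real.sign_of_neg hy, abs_of_neg hy, max_eq_right (by linarith : y - η ≤ 0)]
    rcases le_total (y + η) 0 with h | h
    · rw [max_eq_left (by linarith), min_eq_left h]; ring
    · rw [max_eq_right (by linarith), min_eq_right h]; ring
  · simp [min_eq_right hη, max_eq_right (neg_nonpos.mpr hη)]
  · rw [Real.sign_of_pos hy, abs_of_pos hy, min_eq_right (by linarith : (0 : ℝ) ≤ y + η)]
    ring

theorem continuous_softThresh {η : ℝ} (hη : 0 ≤ η) : Continuous (softThresh η) := by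
  rw [funext (softThresh_eq_max_add_min hη)]
  fun_prop

theorem Real.sign_mul_of_pos_left {c : ℝ} (hc : 0 < c) (y : ℝ) :
    Real.sign (c * y) = Real.sign y := by
  rcases lt_trichotomy y 0 with hy | rfl | hy
  · rw [Real.sign_of_neg hy, Real.sign_of_neg (mul_neg_of_pos_of_neg hc hy)]
  · simp
  · rw [Real.sign_of_pos hy, Real.sign_of_pos (mul_pos hc hy)]

theorem softThresh_mul {c : ℝ} (hc : 0 < c) (η y : ℝ) :
    softThresh (c * η) (c * y) = c * softThresh η y := by
  unfold softThresh
  have hmax : max (c * (|y| - η)) 0 = c * max (|y| - η) 0 := by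
    rw [mul_max_of_nonneg _ _ hc.le, mul_zero]
  rw [Real.sign_mul_of_pos_left hc, abs_mul, abs_of_pos hc, ← mul_sub, hmax]
  ring

theorem softThresh_eq_mul_softThresh_one {η : ℝ} (hη : 0 < η) (y : ℝ) :
    softThresh η y = η * softThresh 1 (y / η) := by
  rw [← softThresh_mul hη, mul_one, mul_div_cancel₀ _ hη.ne']

theorem softThresh_one_sub_self (a : ℝ) : softThresh 1 a - a = -(Real.sign a * min 1 |a|) := by
  rw [softThresh_eq_max_add_min zero_le_one]
  rcases lt_trichotomy a 0 with ha | rfl | ha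
  · rw [Real.sign_of_neg ha, abs_of_neg ha, max_eq_right (by linarith : a - 1 ≤ 0)]
    rcases le_total (a + 1) 0 with h | h
    · rw [min_eq_left h, min_eq_left (by linarith : (1 : ℝ) ≤ -a)]; ring
    · rw [min_eq_right h, min_eq_right (by linarith : -a ≤ 1)]; ring
  · simp
  · rw [Real.sign_of_pos ha, abs_of_pos ha, min_eq_right (by linarith : (0 : ℝ) ≤ a + 1)]
    rcases le_total a 1 with h | h
    · rw [max_eq_right (by linarith), min_eq_right h]; ring
    · rw [max_eq_left (by linarith), min_eq_left h]; ring

theorem stmt_18_general (η θ : ℕ → ℝ) (hηpos : ∀ n, 0 < η n) (ζ : ℝ)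
    (hηe : Tendsto (fun n : ℕ => Real.sqrt n * η n) atTop atTop)
    (hθζ : Tendsto (fun n => θ n / η n) atTop (𝓝 ζ)) :
    ∀ f : BoundedContinuousFunction ℝ ℝ,
      Tendsto (fun n : ℕ => ∫ x, f x ∂(Measure.map
            (fun z => (η n)⁻¹ * (softThresh (η n) (θ n + z / Real.sqrt n) - θ n)) stdGauss))
        atTop
        (𝓝 (∫ x, f x ∂(Measure.dirac (-(Real.sign ζ * min 1 |ζ|)) : Measure ℝ))) := by
  intro f
  have hscaled : ∀ n, (fun z => (η n)⁻¹ * (softThresh (η n) (θ n + z / Real.sqrt n) - θ n)) =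
      fun z => softThresh 1 ((θ n + z / Real.sqrt n) / η n) - θ n / η n := fun n ↦ by
    ext z
    rw [softThresh_eq_mul_softThresh_one (hηpos n), mul_sub, inv_mul_cancel_left₀ (hηpos n).ne',
      inv_mul_eq_div]
  have hdirac : (Measure.dirac (softThresh 1 ζ - ζ) : Measure ℝ) =
      stdGauss.map fun _ ↦ softThresh 1 ζ - ζ := by
    rw [Measure.map_const, measure_univ, one_smul]
  have hpoint (z : ℝ) : Tendsto (fun n : ℕ ↦ (θ n + z / Real.sqrt n) / η n) atTop (𝓝 ζ) := by
    have hnoise : Tendsto (fun n : ℕ ↦ z / (Real.sqrt n * η n)) atTop (𝓝 0) :=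
      tendsto_const_nhds.div_atTop hηe
    simpa only [add_div, div_div, add_zero] using hθζ.add hnoise
  simp only [hscaled, ← softThresh_one_sub_self, hdirac]
  refine (tendstoInDistribution_of_ae_tendsto (fun n ↦ ?_) aemeasurable_const
    (.of_forall fun z ↦ ?_)).tendsto_integral_map f
  · have := continuous_softThresh zero_le_one
    fun_prop
  · exact (((continuous_softThresh zero_le_one).tendsto ζ).comp (hpoint z)).sub hθζ

theorem stmt_18 (η θ : ℕ → ℝ) (hηpos : ∀ n, 0 < η n) (ζ : ℝ)
    (hη0 : Tendsto η atTop (𝓝 0))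
    (hηe : Tendsto (fun n : ℕ => Real.sqrt n * η n) atTop atTop)
    (hθζ : Tendsto (fun n => θ n / η n) atTop (𝓝 ζ)) :
    ∀ f : BoundedContinuousFunction ℝ ℝ,
      Tendsto (fun n : ℕ => ∫ x, f x ∂(Measure.map
            (fun z => (η n)⁻¹ * (softThresh (η n) (θ n + z / Real.sqrt n) - θ n)) stdGauss))
        atTop
        (𝓝 (∫ x, f x ∂(Measure.dirac (-(Real.sign ζ * min 1 |ζ|)) : Measure ℝ))) :=
  stmt_18_general η θ hηpos ζ hηe hθζ
end
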